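/- arXiv:math/0607621 — 5 statements merged into one kernel-verified Lean document; each statement's English description precedes it below -/
import Mathlib

section
/- Let Z ⊆ ℝ^N be a bounded domain, let λ_{n+1} be the (n+1)-th distinct Dirichlet eigenvalue of −Δ on H¹₀(Z), and let Ĥ_n be the closed span of eigenfunctions corresponding to eigenvalues λ_i with i ≥ n+1. Let β ∈ L^∞(Z) with β(z) ≤ λ_{n+1} a.e. and β(z) < λ_{n+1} on a set of positive measure. Then there exists ξ₁ > 0 such that ‖∇x‖₂² − ∫_Z β(z)|x(z)|² dz ≥ ξ₁‖∇x‖₂² for all x ∈ Ĥ_n. -/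
/-!
Suppose no such `ξ₁` exists. Then there are unit vectors `xₖ ∈ Ĥ_n` with
`∫ β xₖ² → 1`. By compactness a subsequence converges weakly in `H` and strongly in `L²`
to some `x₀ ∈ Ĥ_n`; the quadratic form `u ↦ ∫ β u²` is `L²`-continuous (β is bounded),
and the norm is weakly lower semicontinuous, so
`1 ≤ ∫ β x₀² ≤ λ ∫ x₀² ≤ ‖x₀‖² ≤ 1`.
Hence `x₀` is a `λ`-eigenfunction and `∫ (λ - β) x₀² = 0`, so `x₀` vanishes on the set
`{β < λ}` of positive measure. Unique continuation gives `x₀ = 0`, contradicting `1 ≤ ∫ β x₀²`.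
-/

open Filter Topology MeasureTheory

section
variable {Z : Type*} [MeasurableSpace Z] {μ : Measure Z}

theorem integral_abs_mul_le_sqrt_mul_sqrt {u v : Z → ℝ} (hu : MemLp u 2 μ) (hv : MemLp v 2 μ) :
    ∫ z, |u z * v z| ∂μ ≤ √(∫ z, u z ^ 2 ∂μ) * √(∫ z, v z ^ 2 ∂μ) := by
  have h := integral_mul_le_Lp_mul_Lq_of_nonneg Real.HolderConjugate.two_two
    (Eventually.of_forall fun z => abs_nonneg (u z))
    (Eventually.of_forall fun z => abs_nonneg (v z))
    (by rw [ENNReal.ofReal_ofNat]; exact hu.abs) (by rw [ENNReal.ofReal_ofNat]; exact hv.abs)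
  simpa [abs_mul, Real.rpow_two, Real.sqrt_eq_rpow] using h

theorem integrable_mul_sq {β u : Z → ℝ} {C : ℝ} (hβ : AEStronglyMeasurable β μ)
    (hC : ∀ᵐ z ∂μ, |β z| ≤ C) (hu : MemLp u 2 μ) : Integrable (fun z => β z * u z ^ 2) μ :=
  ((memLp_two_iff_integrable_sq hu.1).1 hu).bdd_mul hβ hC

theorem abs_integral_mul_sq_sub_le {β f g : Z → ℝ} {C : ℝ} (hβ : AEStronglyMeasurable β μ)
    (hC : ∀ᵐ z ∂μ, |β z| ≤ C) (hC₀ : 0 ≤ C) (hf : MemLp f 2 μ) (hg : MemLp g 2 μ) :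
    |∫ z, β z * f z ^ 2 ∂μ - ∫ z, β z * g z ^ 2 ∂μ|
      ≤ C * (√(∫ z, (f z - g z) ^ 2 ∂μ) * √(∫ z, (f z + g z) ^ 2 ∂μ)) := by
  have hprod : Integrable (fun z => (f z - g z) * (f z + g z)) μ :=
    (hf.sub hg).integrable_mul (hf.add hg)
  calc |∫ z, β z * f z ^ 2 ∂μ - ∫ z, β z * g z ^ 2 ∂μ|
      = |∫ z, β z * ((f z - g z) * (f z + g z)) ∂μ| := by
        rw [← integral_sub (integrable_mul_sq hβ hC hf) (integrable_mul_sq hβ hC hg)]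
        congr 2 with z; ring
    _ ≤ ∫ z, C * |(f z - g z) * (f z + g z)| ∂μ := by
        refine abs_integral_le_integral_abs.trans
          (integral_mono_ae (hprod.bdd_mul hβ hC).abs (hprod.abs.const_mul C) ?_)
        filter_upwards [hC] with z hz
        rw [abs_mul]
        exact mul_le_mul_of_nonneg_right hz (abs_nonneg _)
    _ ≤ C * (√(∫ z, (f z - g z) ^ 2 ∂μ) * √(∫ z, (f z + g z) ^ 2 ∂μ)) := by
        rw [integral_const_mul]
        exact mul_le_mul_of_nonneg_left
          (integral_abs_mul_le_sqrt_mul_sqrt (hf.sub hg) (hf.add hg)) hC₀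

theorem tendsto_integral_mul_sq {β g : Z → ℝ} {f : ℕ → Z → ℝ} {C : ℝ}
    (hβ : AEStronglyMeasurable β μ) (hC : ∀ᵐ z ∂μ, |β z| ≤ C) (hf : ∀ k, MemLp (f k) 2 μ)
    (hg : MemLp g 2 μ) (hfg : Tendsto (fun k => ∫ z, (f k z - g z) ^ 2 ∂μ) atTop (𝓝 0)) :
    Tendsto (fun k => ∫ z, β z * f k z ^ 2 ∂μ) atTop (𝓝 (∫ z, β z * g z ^ 2 ∂μ)) := by
  set G := ∫ z, g z ^ 2 ∂μ
  have hsq : ∀ {u : Z → ℝ}, MemLp u 2 μ → Integrable (fun z => u z ^ 2) μ :=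
    fun hu => (memLp_two_iff_integrable_sq hu.1).1 hu
  -- `f + g = (f - g) + 2 g`, so `f + g` stays bounded in `L²`.
  have hsum : ∀ k, ∫ z, (f k z + g z) ^ 2 ∂μ ≤ 2 * ∫ z, (f k z - g z) ^ 2 ∂μ + 8 * G := by
    intro k
    rw [← integral_const_mul, ← integral_const_mul, ← integral_add]
    · refine integral_mono (hsq ((hf k).add hg)) ?_ fun z => ?_
      · exact ((hsq ((hf k).sub hg)).const_mul 2).add ((hsq hg).const_mul 8)
      · nlinarith [sq_nonneg (f k z - 3 * g z)]
    · exact (hsq ((hf k).sub hg)).const_mul 2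
    · exact (hsq hg).const_mul 8
  have hbound : Tendsto (fun k => |C| * (√(∫ z, (f k z - g z) ^ 2 ∂μ)
      * √(2 * ∫ z, (f k z - g z) ^ 2 ∂μ + 8 * G))) atTop (𝓝 0) := by
    simpa using (hfg.sqrt.mul ((hfg.const_mul 2).add_const (8 * G)).sqrt).const_mul |C|
  refine tendsto_iff_norm_sub_tendsto_zero.2
    (squeeze_zero (fun k => norm_nonneg _) (fun k => ?_) hbound)
  rw [Real.norm_eq_abs]
  refine (abs_integral_mul_sq_sub_le hβ (hC.mono fun z hz => hz.trans (le_abs_self C))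
    (abs_nonneg C) (hf k) hg).trans ?_
  gcongr
  exact hsum k

theorem integral_mul_sq_const_mul (β f : Z → ℝ) (c : ℝ) :
    ∫ z, β z * (c * f z) ^ 2 ∂μ = c ^ 2 * ∫ z, β z * f z ^ 2 ∂μ := by
  rw [← integral_const_mul]
  congr with z
  ring

theorem integral_mul_sq_le_of_ae_le {β f : Z → ℝ} {lam : ℝ}
    (hf : Integrable (fun z => f z ^ 2) μ) (hβf : Integrable (fun z => β z * f z ^ 2) μ)
    (hβle : ∀ᵐ z ∂μ, β z ≤ lam) : ∫ z, β z * f z ^ 2 ∂μ ≤ lam * ∫ z, f z ^ 2 ∂μ := by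
  rw [← integral_const_mul]
  refine integral_mono_ae hβf (hf.const_mul lam) ?_
  filter_upwards [hβle] with z hz
  exact mul_le_mul_of_nonneg_right hz (sq_nonneg _)

theorem measure_lt_le_measure_eq_zero {β f : Z → ℝ} {lam : ℝ}
    (hf : Integrable (fun z => f z ^ 2) μ) (hβf : Integrable (fun z => β z * f z ^ 2) μ)
    (hβle : ∀ᵐ z ∂μ, β z ≤ lam) (h : lam * ∫ z, f z ^ 2 ∂μ ≤ ∫ z, β z * f z ^ 2 ∂μ) :
    μ {z | β z < lam} ≤ μ {z | f z = 0} := by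
  have hgap : Integrable (fun z => (lam - β z) * f z ^ 2) μ :=
    ((hf.const_mul lam).sub hβf).congr
      (Eventually.of_forall fun z => by simp only [Pi.sub_apply]; ring)
  have hnonneg : 0 ≤ᵐ[μ] fun z => (lam - β z) * f z ^ 2 := by
    filter_upwards [hβle] with z hz
    exact mul_nonneg (sub_nonneg.2 hz) (sq_nonneg _)
  have hzero : ∫ z, (lam - β z) * f z ^ 2 ∂μ = 0 := by
    refine le_antisymm ?_ (integral_nonneg_of_ae hnonneg)
    simp_rw [sub_mul]
    rw [integral_sub (hf.const_mul lam) hβf, integral_const_mul]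
    linarith
  refine measure_mono_ae ?_
  filter_upwards [(integral_eq_zero_iff_of_nonneg_ae hnonneg hgap).1 hzero] with z hz hlt
  show f z = 0
  simpa [(sub_pos.2 hlt).ne'] using hz
end

theorem norm_le_of_tendsto_inner {H α : Type*} [NormedAddCommGroup H] [InnerProductSpace ℝ H]
    {l : Filter α} [l.NeBot] {x : α → H} {x₀ : H} {r : ℝ} (hx : ∀ᶠ k in l, ‖x k‖ ≤ r)
    (h : Tendsto (fun k => inner ℝ (x k) x₀) l (𝓝 (inner ℝ x₀ x₀))) : ‖x₀‖ ≤ r := by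
  have hsq : ‖x₀‖ ^ 2 ≤ r * ‖x₀‖ := by
    rw [← real_inner_self_eq_norm_sq]
    refine le_of_tendsto h (hx.mono fun k hk => ?_)
    exact (real_inner_le_norm _ _).trans (mul_le_mul_of_nonneg_right hk (norm_nonneg _))
  obtain ⟨k, hk⟩ := hx.exists
  nlinarith [norm_nonneg (x k), norm_nonneg x₀]

theorem mul_norm_sq_le_of_unit {E : Type*} [NormedAddCommGroup E] [NormedSpace ℝ E]
    (S : Submodule ℝ E) {q : E → ℝ} (hq : ∀ (c : ℝ) x, q (c • x) = c ^ 2 * q x) {ξ : ℝ}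
    (h : ∀ x ∈ S, ‖x‖ = 1 → ξ ≤ q x) : ∀ x ∈ S, ξ * ‖x‖ ^ 2 ≤ q x := by
  intro x hx
  rcases eq_or_ne x 0 with rfl | hx0
  · simpa using (hq 0 0).ge
  · have hpos : 0 < ‖x‖ := norm_pos_iff.2 hx0
    have hunit : ‖‖x‖⁻¹ • x‖ = 1 := by
      rw [norm_smul, norm_inv, norm_norm, inv_mul_cancel₀ hpos.ne']
    calc ξ * ‖x‖ ^ 2 ≤ ‖x‖ ^ 2 * q (‖x‖⁻¹ • x) := by
          rw [mul_comm]
          exact mul_le_mul_of_nonneg_left (h _ (S.smul_mem _ hx) hunit) (sq_nonneg _)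
      _ = q x := by rw [← hq, smul_inv_smul₀ hpos.ne']

/-- `H` plays the role of `H¹₀(Z)` with the gradient inner product (so `‖x‖ = ‖∇x‖₂`),
`ι x` is the realization of `x` as a function on `Z`, `lam = λ_{n+1}` and `Hn = Ĥ_n`.
`hCompact` encodes the compact embedding `H¹₀ ⊆ L²`, and `hUC` the unique continuation
property of `E(λ_{n+1}) = {x ∈ Ĥ_n : ‖∇x‖₂² = λ_{n+1}‖x‖₂²}`. -/
theorem rayleigh_gap_general {H : Type*} [NormedAddCommGroup H] [InnerProductSpace ℝ H]
    {Z : Type*} [MeasurableSpace Z] (μ : Measure Z)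
    (ι : H →ₗ[ℝ] (Z → ℝ)) (Hn : Submodule ℝ H) (lam : ℝ)
    (hmeas : ∀ x : H, Measurable (ι x))
    (hint : ∀ x : H, Integrable (fun z => (ι x z) ^ 2) μ)
    (hRayleigh : ∀ x ∈ Hn, lam * ∫ z, (ι x z) ^ 2 ∂μ ≤ ‖x‖ ^ 2)
    (hCompact : ∀ x : ℕ → H, (∀ k, x k ∈ Hn) → (∀ k, ‖x k‖ ≤ 1) →
      ∃ (x₀ : H) (σ : ℕ → ℕ), StrictMono σ ∧ x₀ ∈ Hn ∧
        (∀ y : H, Tendsto (fun k => inner ℝ (x (σ k)) y) atTop (nhds (inner ℝ x₀ y : ℝ))) ∧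
        Tendsto (fun k => ∫ z, (ι (x (σ k)) z - ι x₀ z) ^ 2 ∂μ) atTop (nhds (0 : ℝ)))
    (hUC : ∀ x ∈ Hn, ‖x‖ ^ 2 = lam * ∫ z, (ι x z) ^ 2 ∂μ →
      0 < μ {z | ι x z = 0} → x = 0)
    (β : Z → ℝ) (hβmeas : Measurable β) (hβbdd : ∃ C, ∀ z, |β z| ≤ C)
    (hβle : ∀ᵐ z ∂μ, β z ≤ lam) (hβlt : 0 < μ {z | β z < lam}) :
    ∃ ξ₁ > (0 : ℝ), ∀ x ∈ Hn,
      ξ₁ * ‖x‖ ^ 2 ≤ ‖x‖ ^ 2 - ∫ z, β z * (ι x z) ^ 2 ∂μ := by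
  obtain ⟨C, hC⟩ := hβbdd
  have hL2 : ∀ x, MemLp (ι x) 2 μ := fun x =>
    (memLp_two_iff_integrable_sq (hmeas x).aestronglyMeasurable).2 (hint x)
  have hβx : ∀ x, Integrable (fun z => β z * (ι x z) ^ 2) μ := fun x =>
    integrable_mul_sq hβmeas.aestronglyMeasurable (ae_of_all _ hC) (hL2 x)
  suffices ∃ ξ > 0, ∀ x ∈ Hn, ‖x‖ = 1 → ξ ≤ 1 - ∫ z, β z * (ι x z) ^ 2 ∂μ by
    obtain ⟨ξ, hξ, hunit⟩ := this
    refine ⟨ξ, hξ, mul_norm_sq_le_of_unit Hn (fun c x => ?_) fun x hx h1 => by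
      simpa [h1] using hunit x hx h1⟩
    simp only [map_smul, Pi.smul_apply, smul_eq_mul, norm_smul, integral_mul_sq_const_mul]
    rw [mul_pow, Real.norm_eq_abs, sq_abs]
    ring
  by_contra! hcon
  choose x hxHn hx1 hxβ using fun k : ℕ => hcon (1 / ((k : ℝ) + 1)) Nat.one_div_pos_of_nat
  obtain ⟨x₀, σ, hσ, hx₀, hweak, hstrong⟩ := hCompact x hxHn fun k => (hx1 k).le
  have hlower : Tendsto (fun k => 1 - 1 / ((σ k : ℝ) + 1)) atTop (𝓝 1) := by
    simpa using tendsto_const_nhds.sub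
      ((tendsto_one_div_add_atTop_nhds_zero_nat (𝕜 := ℝ)).comp hσ.tendsto_atTop)
  have hβx₀ : 1 ≤ ∫ z, β z * (ι x₀ z) ^ 2 ∂μ :=
    le_of_tendsto_of_tendsto' hlower (tendsto_integral_mul_sq hβmeas.aestronglyMeasurable
      (ae_of_all _ hC) (fun k => hL2 _) (hL2 x₀) hstrong) fun k => by linarith [hxβ (σ k)]
  have hx₀sq : ‖x₀‖ ^ 2 ≤ 1 := pow_le_one₀ (norm_nonneg _)
    (norm_le_of_tendsto_inner (Eventually.of_forall fun k => (hx1 (σ k)).le) (hweak x₀))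
  have hβlam := integral_mul_sq_le_of_ae_le (hint x₀) (hβx x₀) hβle
  have hzero : x₀ = 0 := by
    refine hUC x₀ hx₀ (le_antisymm (by linarith) (hRayleigh x₀ hx₀)) (hβlt.trans_le ?_)
    exact measure_lt_le_measure_eq_zero (hint x₀) (hβx x₀) hβle (by linarith [hRayleigh x₀ hx₀])
  norm_num [hzero] at hβx₀

/-- Abstract form of Lemma 2. `H` plays the role of `H¹₀(Z)` with the gradient
inner product (so `‖x‖ = ‖∇x‖₂`), `ι x` is the realization of `x` as a function
on `Z`, `lam = λ_{n+1}` and `Hn = Ĥ_n`.  The hypotheses encode: the Rayleigh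
quotient characterization of `λ_{n+1}` on `Ĥ_n`, the compact embedding
`H¹₀ ⊆ L²` (bounded sequences in `Ĥ_n` admit subsequences converging weakly in
`H¹₀` and strongly in `L²`), and the unique continuation property of the
eigenspace `E(λ_{n+1}) = {x ∈ Ĥ_n : ‖∇x‖₂² = λ_{n+1}‖x‖₂²}`.  If
`β ∈ L^∞(Z)`, `β ≤ λ_{n+1}` a.e. with strict inequality on a set of positive
measure, then `‖∇x‖₂² − ∫ β|x|² ≥ ξ₁‖∇x‖₂²` on `Ĥ_n` for some `ξ₁ > 0`. -/
theorem rayleigh_gap {H : Type*} [NormedAddCommGroup H] [InnerProductSpace ℝ H]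
    [CompleteSpace H] {Z : Type*} [MeasurableSpace Z] (μ : Measure Z) [IsFiniteMeasure μ]
    (ι : H →ₗ[ℝ] (Z → ℝ)) (Hn : Submodule ℝ H) (lam : ℝ) (hlam : 0 < lam)
    (hmeas : ∀ x : H, Measurable (ι x))
    (hint : ∀ x : H, Integrable (fun z => (ι x z) ^ 2) μ)
    (hRayleigh : ∀ x ∈ Hn, lam * ∫ z, (ι x z) ^ 2 ∂μ ≤ ‖x‖ ^ 2)
    (hCompact : ∀ x : ℕ → H, (∀ k, x k ∈ Hn) → (∀ k, ‖x k‖ ≤ 1) →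
      ∃ (x₀ : H) (σ : ℕ → ℕ), StrictMono σ ∧ x₀ ∈ Hn ∧
        (∀ y : H, Tendsto (fun k => inner ℝ (x (σ k)) y) atTop (nhds (inner ℝ x₀ y : ℝ))) ∧
        Tendsto (fun k => ∫ z, (ι (x (σ k)) z - ι x₀ z) ^ 2 ∂μ) atTop (nhds (0 : ℝ)))
    (hUC : ∀ x ∈ Hn, ‖x‖ ^ 2 = lam * ∫ z, (ι x z) ^ 2 ∂μ →
      0 < μ {z | ι x z = 0} → x = 0)
    (β : Z → ℝ) (hβmeas : Measurable β) (hβbdd : ∃ C, ∀ z, |β z| ≤ C)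
    (hβle : ∀ᵐ z ∂μ, β z ≤ lam) (hβlt : 0 < μ {z | β z < lam}) :
    ∃ ξ₁ > (0 : ℝ), ∀ x ∈ Hn,
      ξ₁ * ‖x‖ ^ 2 ≤ ‖x‖ ^ 2 - ∫ z, β z * (ι x z) ^ 2 ∂μ :=
  rayleigh_gap_general μ ι Hn lam hmeas hint hRayleigh hCompact hUC β hβmeas hβbdd hβle hβlt
end

section
/- Let H be a Hilbert space with orthogonal decomposition H = H₀ ⊕ Ĥ, and let φ: H → ℝ be a function. Suppose θ: H₀ → Ĥ satisfies φ(u + θ(u)) = inf_{v∈Ĥ} φ(u + v) for all u ∈ H₀. Define φ̄(u) = φ(u + θ(u)). Then for all u, h ∈ H₀: φ̄(u+h) − φ̄(u) ≤ φ(u+h+θ(u)) − φ(u+θ(u)) and φ̄(u) − φ̄(u+h) ≤ φ(u+θ(u+h)) − φ(u+h+θ(u+h)). Consequently, if φ is locally Lipschitz and θ is continuous, then φ̄ is locally Lipschitz. -/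
/-!
If `θ` selects minimizers, then `φ̄(a) - φ̄(b) ≤ φ(a + θ b) - φ(b + θ b)`: replacing the optimal
`θ a` by the admissible `θ b` can only increase `φ`. The right-hand side moves only the
`H₀`-component, so a local Lipschitz constant of `φ` near `u₀ + θ u₀` bounds it by `K ‖a - b‖`
for `a, b` near `u₀`, which stay in that neighbourhood together with `θ b` by continuity of `θ`.
-/

open Filter

theorem LocallyLipschitz.comp_add_of_forall_le {X E : Type*} [PseudoMetricSpace X]
    [SeminormedAddCommGroup E] {φ : E → ℝ} (hφ : LocallyLipschitz φ) {ι θ : X → E}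
    (hι : Isometry ι) (hθ : Continuous θ) (hmin : ∀ a b, φ (ι a + θ a) ≤ φ (ι a + θ b)) :
    LocallyLipschitz fun x => φ (ι x + θ x) := by
  intro x₀
  obtain ⟨K, t, ht, hK⟩ := hφ (ι x₀ + θ x₀)
  have hcont : Continuous fun p : X × X => ι p.1 + θ p.2 :=
    (hι.continuous.comp continuous_fst).add (hθ.comp continuous_snd)
  obtain ⟨U, hU, hUt⟩ := mem_prod_self_iff.mp <|
    (nhds_prod_eq (x := x₀) (y := x₀)) ▸ hcont.continuousAt.preimage_mem_nhds ht
  refine ⟨K, U, hU, LipschitzOnWith.of_le_add_mul K fun a ha b hb => ?_⟩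
  have hdist : dist (ι a + θ b) (ι b + θ b) = dist a b := by
    rw [dist_add_right, hι.dist_eq]
  calc φ (ι a + θ a) ≤ φ (ι a + θ b) := hmin a b
    _ ≤ φ (ι b + θ b) + K * dist a b :=
      hdist ▸ hK.le_add_mul (hUt (Set.mk_mem_prod ha hb)) (hUt (Set.mk_mem_prod hb hb))

theorem reduced_functional_locallyLipschitz_general {H : Type*} [NormedAddCommGroup H]
    [InnerProductSpace ℝ H]
    (H₀ Hhat : Submodule ℝ H)
    (φ : H → ℝ) (hφ : LocallyLipschitz φ)
    (θ : H₀ → Hhat) (hθc : Continuous θ)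
    (hθmin : ∀ (u : H₀) (v : Hhat), φ ((u : H) + (θ u : H)) ≤ φ ((u : H) + (v : H))) :
    (∀ u h : H₀,
      φ (((u + h : H₀) : H) + (θ (u + h) : H)) - φ ((u : H) + (θ u : H)) ≤
        φ (((u + h : H₀) : H) + (θ u : H)) - φ ((u : H) + (θ u : H))) ∧
    (∀ u h : H₀,
      φ ((u : H) + (θ u : H)) - φ (((u + h : H₀) : H) + (θ (u + h) : H)) ≤
        φ ((u : H) + (θ (u + h) : H)) - φ (((u + h : H₀) : H) + (θ (u + h) : H))) ∧
    LocallyLipschitz (fun u : H₀ => φ ((u : H) + (θ u : H))) :=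
  ⟨fun u h => sub_le_sub_right (hθmin (u + h) (θ u)) _,
    fun u h => sub_le_sub_right (hθmin u (θ (u + h))) _,
    hφ.comp_add_of_forall_le isometry_subtype_coe (continuous_subtype_val.comp hθc)
      fun a b => hθmin a (θ b)⟩

/-- Properties of the reduced functional `φ̄(u) = φ(u + θ(u))`, where `θ`
selects minimizers in the fibers `u + Ĥ`: the two elementary inequalities and,
when `φ` is locally Lipschitz and `θ` continuous, the local Lipschitz property
of `φ̄`. -/
theorem reduced_functional_locallyLipschitz {H : Type*} [NormedAddCommGroup H]
    [InnerProductSpace ℝ H] [CompleteSpace H]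
    (H₀ Hhat : Submodule ℝ H)
    (horth : ∀ u ∈ H₀, ∀ v ∈ Hhat, inner ℝ u v = (0 : ℝ))
    (hcompl : ∀ x : H, ∃ u ∈ H₀, ∃ v ∈ Hhat, x = u + v)
    (φ : H → ℝ) (hφ : LocallyLipschitz φ)
    (θ : H₀ → Hhat) (hθc : Continuous θ)
    (hθmin : ∀ (u : H₀) (v : Hhat), φ ((u : H) + (θ u : H)) ≤ φ ((u : H) + (v : H))) :
    (∀ u h : H₀,
      φ (((u + h : H₀) : H) + (θ (u + h) : H)) - φ ((u : H) + (θ u : H)) ≤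
        φ (((u + h : H₀) : H) + (θ u : H)) - φ ((u : H) + (θ u : H))) ∧
    (∀ u h : H₀,
      φ ((u : H) + (θ u : H)) - φ (((u + h : H₀) : H) + (θ (u + h) : H)) ≤
        φ ((u : H) + (θ (u + h) : H)) - φ (((u + h : H₀) : H) + (θ (u + h) : H))) ∧
    LocallyLipschitz (fun u : H₀ => φ ((u : H) + (θ u : H))) :=
  reduced_functional_locallyLipschitz_general H₀ Hhat φ hφ θ hθc hθmin
end

section
/- With the notation of the reduction: H = H₀ ⊕ Ĥ, φ: H → ℝ locally Lipschitz, θ: H₀ → Ĥ continuous with φ(u+θ(u)) = inf_{v∈Ĥ}φ(u+v), φ̄(u) = φ(u+θ(u)). Then the Clarke generalized directional derivatives satisfy φ̄⁰(u; h) ≤ φ⁰(u + θ(u); h) for all u, h ∈ H₀, and hence ∂φ̄(u) ⊆ p_{H₀*} ∂φ(u + θ(u)), where p_{H₀*} is the orthogonal projection (adjoint of the inclusion H₀ ↪ H). -/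
/-! Since `θ u` minimizes `φ (u + ·)` on `Ĥ`, the difference quotients of `φ̄` are bounded above by
those of `φ` at the base points `w + θ w` and below by those at `w + θ (w + t • h)`; continuity of
`θ` sends both families of base points to `u + θ u`. The lower bound is what makes the real
`limsup` defining `φ̄⁰(u; h)` meaningful, and the upper bound gives `φ̄⁰(u; h) ≤ φ⁰(u + θ u; h)`.
The inclusion of subdifferentials then follows from Hahn–Banach: `h ↦ φ⁰(u + θ u; h)` is sublinear and
bounded by a multiple of `‖h‖`, so a functional below it on `H₀` extends to one below it on `H`. -/

open Filter Topology

noncomputable def clarkeDeriv {X : Type*} [NormedAddCommGroup X] [NormedSpace ℝ X]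
    (φ : X → ℝ) (x h : X) : ℝ :=
  Filter.limsup (fun p : X × ℝ => (φ (p.1 + p.2 • h) - φ p.1) / p.2)
    ((nhds x) ×ˢ (nhdsWithin 0 (Set.Ioi (0 : ℝ))))


def clarkeSubdiff {X : Type*} [NormedAddCommGroup X] [NormedSpace ℝ X]
    (φ : X → ℝ) (x : X) : Set (X →L[ℝ] ℝ) :=
  {xs | ∀ h, xs h ≤ clarkeDeriv φ x h}

section Clarke

variable {X : Type*} [NormedAddCommGroup X] [NormedSpace ℝ X]

noncomputable def clarkeQuotient (φ : X → ℝ) (h : X) (p : X × ℝ) : ℝ :=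
  (φ (p.1 + p.2 • h) - φ p.1) / p.2

lemma clarkeDeriv_eq_limsup (φ : X → ℝ) (x h : X) :
    clarkeDeriv φ x h = limsup (clarkeQuotient φ h) (𝓝 x ×ˢ 𝓝[>] 0) := rfl

lemma eventually_snd_pos_prod_nhdsGT {α : Type*} (l : Filter α) :
    ∀ᶠ p : α × ℝ in l ×ˢ 𝓝[>] 0, 0 < p.2 :=
  tendsto_snd.eventually self_mem_nhdsWithin

lemma tendsto_fst_add_snd_smul (x h : X) :
    Tendsto (fun p : X × ℝ => p.1 + p.2 • h) (𝓝 x ×ˢ 𝓝[>] (0 : ℝ)) (𝓝 x) := by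
  simpa using tendsto_fst.add
    ((tendsto_snd.mono_right (nhdsWithin_le_nhds (a := (0 : ℝ)))).smul_const h)

lemma LocallyLipschitz.exists_abs_clarkeQuotient_le {φ : X → ℝ} (hφ : LocallyLipschitz φ)
    (x : X) : ∃ K : ℝ, ∀ h : X, ∀ᶠ p in 𝓝 x ×ˢ 𝓝[>] 0, |clarkeQuotient φ h p| ≤ K * ‖h‖ := by
  obtain ⟨K, t, ht, hlip⟩ := hφ x
  refine ⟨K, fun h => ?_⟩
  filter_upwards [tendsto_fst.eventually ht, (tendsto_fst_add_snd_smul x h).eventually ht,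
    eventually_snd_pos_prod_nhdsGT _] with p hp hph hpos
  rw [clarkeQuotient, abs_div, abs_of_pos hpos, div_le_iff₀ hpos, ← Real.dist_eq]
  calc dist (φ (p.1 + p.2 • h)) (φ p.1) ≤ K * dist (p.1 + p.2 • h) p.1 :=
        hlip.dist_le_mul _ hph _ hp
    _ = K * ‖h‖ * p.2 := by
        rw [dist_self_add_left, norm_smul, Real.norm_of_nonneg hpos.le]; ring

lemma LocallyLipschitz.limsup_clarkeQuotient_comp_le {ι : Type*} {l : Filter ι} [l.NeBot]
    {φ : X → ℝ} (hφ : LocallyLipschitz φ) {x : X} {F : ι → X × ℝ}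
    (hF : Tendsto F l (𝓝 x ×ˢ 𝓝[>] 0)) (h : X) :
    limsup (fun i => clarkeQuotient φ h (F i)) l ≤ clarkeDeriv φ x h := by
  obtain ⟨K, hK⟩ := hφ.exists_abs_clarkeQuotient_le x
  exact limsup_le_limsup_of_le hF
    (isCoboundedUnder_le_of_eventually_le _
      (hF.eventually ((hK h).mono fun _ hp => (abs_le.1 hp).1)))
    (isBoundedUnder_of_eventually_le ((hK h).mono fun _ hp => (abs_le.1 hp).2))

theorem LocallyLipschitz.clarkeDeriv_le_of_eventually_le
    {Y : Type*} [NormedAddCommGroup Y] [NormedSpace ℝ Y] {ψ : Y → ℝ} {φ : X → ℝ}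
    (hφ : LocallyLipschitz φ) {y k : Y} {x h : X} {F G : Y × ℝ → X × ℝ}
    (hF : Tendsto F (𝓝 y ×ˢ 𝓝[>] 0) (𝓝 x ×ˢ 𝓝[>] 0))
    (hG : Tendsto G (𝓝 y ×ˢ 𝓝[>] 0) (𝓝 x ×ˢ 𝓝[>] 0))
    (hle : ∀ᶠ p in 𝓝 y ×ˢ 𝓝[>] 0, clarkeQuotient ψ k p ≤ clarkeQuotient φ h (F p))
    (hge : ∀ᶠ p in 𝓝 y ×ˢ 𝓝[>] 0, clarkeQuotient φ h (G p) ≤ clarkeQuotient ψ k p) :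
    clarkeDeriv ψ y k ≤ clarkeDeriv φ x h := by
  obtain ⟨K, hK⟩ := hφ.exists_abs_clarkeQuotient_le x
  have hbddBelow : ∀ᶠ p in 𝓝 y ×ˢ 𝓝[>] 0, -(K * ‖h‖) ≤ clarkeQuotient ψ k p :=
    (hG.eventually (hK h)).and hge |>.mono fun _ hp => (abs_le.1 hp.1).1.trans hp.2
  have hbddAbove : ∀ᶠ p in 𝓝 y ×ˢ 𝓝[>] 0, clarkeQuotient φ h (F p) ≤ K * ‖h‖ :=
    (hF.eventually (hK h)).mono fun _ hp => (abs_le.1 hp).2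
  exact (limsup_le_limsup hle (isCoboundedUnder_le_of_eventually_le _ hbddBelow)
    (isBoundedUnder_of_eventually_le hbddAbove)).trans (hφ.limsup_clarkeQuotient_comp_le hF h)

theorem LocallyLipschitz.exists_clarkeDeriv_le_mul_norm {φ : X → ℝ} (hφ : LocallyLipschitz φ)
    (x : X) : ∃ K : ℝ, ∀ h : X, clarkeDeriv φ x h ≤ K * ‖h‖ := by
  obtain ⟨K, hK⟩ := hφ.exists_abs_clarkeQuotient_le x
  exact ⟨K, fun h => limsup_le_of_le
    (isCoboundedUnder_le_of_eventually_le _ ((hK h).mono fun _ hp => (abs_le.1 hp).1))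
    ((hK h).mono fun _ hp => (abs_le.1 hp).2)⟩

theorem LocallyLipschitz.clarkeDeriv_add_le {φ : X → ℝ} (hφ : LocallyLipschitz φ)
    (x h₁ h₂ : X) : clarkeDeriv φ x (h₁ + h₂) ≤ clarkeDeriv φ x h₁ + clarkeDeriv φ x h₂ := by
  obtain ⟨K, hK⟩ := hφ.exists_abs_clarkeQuotient_le x
  -- shifting the base point by `t • h₂` splits the quotient in direction `h₁ + h₂`
  let G : X × ℝ → X × ℝ := fun p => (p.1 + p.2 • h₂, p.2)
  have hG : Tendsto G (𝓝 x ×ˢ 𝓝[>] 0) (𝓝 x ×ˢ 𝓝[>] 0) :=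
    (tendsto_fst_add_snd_smul x h₂).prodMk tendsto_snd
  have hsplit : clarkeQuotient φ (h₁ + h₂) =
      (fun p => clarkeQuotient φ h₁ (G p)) + clarkeQuotient φ h₂ := by
    funext p
    simp only [clarkeQuotient, G, Pi.add_apply, smul_add, ← add_assoc, add_right_comm _ (p.2 • h₁)]
    ring
  have hG₁ := hG.eventually (hK h₁)
  rw [clarkeDeriv_eq_limsup, hsplit]
  exact (limsup_add_le
      (isBoundedUnder_of_eventually_ge (hG₁.mono fun _ hp => (abs_le.1 hp).1))
      (isBoundedUnder_of_eventually_le (hG₁.mono fun _ hp => (abs_le.1 hp).2))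
      (isCoboundedUnder_le_of_eventually_le _ ((hK h₂).mono fun _ hp => (abs_le.1 hp).1))
      (isBoundedUnder_of_eventually_le ((hK h₂).mono fun _ hp => (abs_le.1 hp).2))).trans
    (add_le_add_left (hφ.limsup_clarkeQuotient_comp_le hG h₁) _)

lemma map_const_mul_nhdsGT_zero {c : ℝ} (hc : 0 < c) : map (c * ·) (𝓝[>] 0) = 𝓝[>] 0 := by
  nth_rw 1 [← comap_mulLeft_nhdsGT_zero hc]
  exact map_comap_of_surjective (fun y => ⟨c⁻¹ * y, by field_simp⟩) _

theorem LocallyLipschitz.clarkeDeriv_smul {φ : X → ℝ} (hφ : LocallyLipschitz φ) (x : X)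
    {c : ℝ} (hc : 0 < c) (h : X) : clarkeDeriv φ x (c • h) = c * clarkeDeriv φ x h := by
  obtain ⟨K, hK⟩ := hφ.exists_abs_clarkeQuotient_le x
  let G : X × ℝ → X × ℝ := Prod.map id (c * ·)
  have hmap : map G (𝓝 x ×ˢ 𝓝[>] 0) = 𝓝 x ×ˢ 𝓝[>] 0 := by
    rw [← prod_map_map_eq', map_id, map_const_mul_nhdsGT_zero hc]
  have hscale : clarkeQuotient φ (c • h) = (fun p => c * clarkeQuotient φ h p) ∘ G := by
    funext p
    simp only [clarkeQuotient, G, Function.comp, Prod.map, id, smul_smul, mul_comm p.2 c]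
    field_simp
  have hb : ∀ᶠ p in 𝓝 x ×ˢ 𝓝[>] 0, |c * clarkeQuotient φ h p| ≤ c * (K * ‖h‖) :=
    (hK h).mono fun _ hp => by rw [abs_mul, abs_of_pos hc]; gcongr
  rw [clarkeDeriv_eq_limsup, clarkeDeriv_eq_limsup, hscale, limsup_comp, hmap]
  exact ((OrderIso.mulLeft₀ c hc).limsup_apply
    (isBoundedUnder_of_eventually_le ((hK h).mono fun _ hp => (abs_le.1 hp).2))
    (isCoboundedUnder_le_of_eventually_le _ ((hK h).mono fun _ hp => (abs_le.1 hp).1))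
    (isBoundedUnder_of_eventually_le (hb.mono fun _ hp => (abs_le.1 hp).2))
    (isCoboundedUnder_le_of_eventually_le _ (hb.mono fun _ hp => (abs_le.1 hp).1))).symm

end Clarke

theorem exists_extension_le_of_le_sublinear_of_le_mul_norm {E : Type*} [NormedAddCommGroup E]
    [NormedSpace ℝ E] {p : Submodule ℝ E} (f : p →L[ℝ] ℝ) {N : E → ℝ}
    (N_hom : ∀ c : ℝ, 0 < c → ∀ x, N (c • x) = c * N x) (N_add : ∀ x y, N (x + y) ≤ N x + N y)
    {K : ℝ} (hNK : ∀ x, N x ≤ K * ‖x‖) (hf : ∀ x : p, f x ≤ N x) :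
    ∃ g : E →L[ℝ] ℝ, (∀ x : p, g x = f x) ∧ ∀ x, g x ≤ N x := by
  obtain ⟨g, hgf, hgN⟩ := exists_extension_of_le_sublinear ⟨p, f⟩ N N_hom N_add hf
  have hg : ∀ x, ‖g x‖ ≤ K * ‖x‖ := fun x => by
    rw [Real.norm_eq_abs, abs_le]
    constructor
    · have := (hgN (-x)).trans (hNK (-x))
      rw [map_neg, norm_neg] at this
      linarith
    · exact (hgN x).trans (hNK x)
  exact ⟨g.mkContinuous K hg, hgf, hgN⟩

theorem LocallyLipschitz.exists_mem_clarkeSubdiff_restrict {E : Type*} [NormedAddCommGroup E]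
    [NormedSpace ℝ E] {p : Submodule ℝ E} {ψ : p → ℝ} {φ : E → ℝ} (hφ : LocallyLipschitz φ)
    {y : p} {x : E} (hle : ∀ h : p, clarkeDeriv ψ y h ≤ clarkeDeriv φ x h) :
    ∀ us ∈ clarkeSubdiff ψ y, ∃ ws ∈ clarkeSubdiff φ x, ∀ h : p, us h = ws h := by
  intro us hus
  obtain ⟨K, hK⟩ := hφ.exists_clarkeDeriv_le_mul_norm x
  obtain ⟨ws, hext, hws⟩ := exists_extension_le_of_le_sublinear_of_le_mul_norm us
    (fun _ hc h => hφ.clarkeDeriv_smul x hc h) (hφ.clarkeDeriv_add_le x) hK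
    (fun h => (hus h).trans (hle h))
  exact ⟨ws, hws, fun h => (hext h).symm⟩

theorem LocallyLipschitz.clarkeDeriv_reduced_le {E : Type*} [NormedAddCommGroup E]
    [NormedSpace ℝ E] {H₀ Hhat : Submodule ℝ E} {φ : E → ℝ} (hφ : LocallyLipschitz φ)
    {θ : H₀ → Hhat} (hθ : Continuous θ)
    (hθmin : ∀ (u : H₀) (v : Hhat), φ ((u : E) + (θ u : E)) ≤ φ ((u : E) + (v : E)))
    (u h : H₀) :
    clarkeDeriv (fun w : H₀ => φ ((w : E) + (θ w : E))) u h ≤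
      clarkeDeriv φ ((u : E) + (θ u : E)) (h : E) := by
  have hθE : Continuous fun w : H₀ => (θ w : E) := continuous_subtype_val.comp hθ
  refine hφ.clarkeDeriv_le_of_eventually_le
    (F := fun p => ((p.1 : E) + θ p.1, p.2)) (G := fun p => ((p.1 : E) + θ (p.1 + p.2 • h), p.2))
    ?_ ?_ ?_ ?_
  · exact (((continuous_subtype_val.add hθE).tendsto u).comp tendsto_fst).prodMk tendsto_snd
  · exact ((((continuous_subtype_val.tendsto u).comp tendsto_fst).add
      ((hθE.tendsto u).comp (tendsto_fst_add_snd_smul u h))).prodMk tendsto_snd)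
  · filter_upwards [eventually_snd_pos_prod_nhdsGT _] with p hp
    refine div_le_div_of_nonneg_right ?_ hp.le
    have := hθmin (p.1 + p.2 • h) (θ p.1)
    simp only [Submodule.coe_add, Submodule.coe_smul] at this ⊢
    rw [add_right_comm (p.1 : E) (θ p.1 : E)]
    linarith
  · filter_upwards [eventually_snd_pos_prod_nhdsGT _] with p hp
    refine div_le_div_of_nonneg_right ?_ hp.le
    have := hθmin p.1 (θ (p.1 + p.2 • h))
    simp only [Submodule.coe_add, Submodule.coe_smul] at this ⊢
    rw [add_right_comm (p.1 : E) (θ (p.1 + p.2 • h) : E)]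
    linarith

theorem reduced_functional_subdiff_general {H : Type*} [NormedAddCommGroup H]
    [InnerProductSpace ℝ H]
    (H₀ Hhat : Submodule ℝ H)
    (φ : H → ℝ) (hφ : LocallyLipschitz φ)
    (θ : H₀ → Hhat) (hθc : Continuous θ)
    (hθmin : ∀ (u : H₀) (v : Hhat), φ ((u : H) + (θ u : H)) ≤ φ ((u : H) + (v : H))) :
    (∀ u h : H₀,
      clarkeDeriv (fun w : H₀ => φ ((w : H) + (θ w : H))) u h ≤
        clarkeDeriv φ ((u : H) + (θ u : H)) (h : H)) ∧
    (∀ u : H₀, ∀ us ∈ clarkeSubdiff (fun w : H₀ => φ ((w : H) + (θ w : H))) u,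
      ∃ ws ∈ clarkeSubdiff φ ((u : H) + (θ u : H)), ∀ h : H₀, us h = ws (h : H)) :=
  ⟨hφ.clarkeDeriv_reduced_le hθc hθmin,
    fun u => hφ.exists_mem_clarkeSubdiff_restrict (hφ.clarkeDeriv_reduced_le hθc hθmin u)⟩

/-- Clarke derivative estimate for the reduced functional: `φ̄⁰(u;h) ≤ φ⁰(u+θ(u);h)`
and hence `∂φ̄(u) ⊆ p_{H₀*}∂φ(u+θ(u))` (an element of `∂φ̄(u)` is the restriction
to `H₀` of an element of `∂φ(u+θ(u))`). -/
theorem reduced_functional_subdiff {H : Type*} [NormedAddCommGroup H]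
    [InnerProductSpace ℝ H] [CompleteSpace H]
    (H₀ Hhat : Submodule ℝ H)
    (horth : ∀ u ∈ H₀, ∀ v ∈ Hhat, inner ℝ u v = (0 : ℝ))
    (hcompl : ∀ x : H, ∃ u ∈ H₀, ∃ v ∈ Hhat, x = u + v)
    (φ : H → ℝ) (hφ : LocallyLipschitz φ)
    (θ : H₀ → Hhat) (hθc : Continuous θ)
    (hθmin : ∀ (u : H₀) (v : Hhat), φ ((u : H) + (θ u : H)) ≤ φ ((u : H) + (v : H))) :
    (∀ u h : H₀,
      clarkeDeriv (fun w : H₀ => φ ((w : H) + (θ w : H))) u h ≤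
        clarkeDeriv φ ((u : H) + (θ u : H)) (h : H)) ∧
    (∀ u : H₀, ∀ us ∈ clarkeSubdiff (fun w : H₀ => φ ((w : H) + (θ w : H))) u,
      ∃ ws ∈ clarkeSubdiff φ ((u : H) + (θ u : H)), ∀ h : H₀, us h = ws (h : H)) :=
  reduced_functional_subdiff_general H₀ Hhat φ hφ θ hθc hθmin
end

section
/- Let X be a reflexive Banach space, A: X → X* a maximal monotone operator which is coercive (⟨A(x), x⟩/‖x‖ → +∞ as ‖x‖ → ∞). Then A is surjective; in particular there exists v₀ ∈ X with A(v₀) = 0 when 0 is in the range. -/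
/-!
Minty's trick. By reflexivity the closed balls of `X` are weakly compact, so it suffices to solve
finitely many of the Minty inequalities `⟨z - w, x - y⟩ ≤ 0` (for `z ∈ A y`, `‖y‖ ≤ ρ`) at once.
For finitely many points this is a matrix game whose payoff `a i j = ⟨z i - w, y i - y j⟩` satisfies
`a i j + a j i ≥ 0` by monotonicity, and the minimax theorem provides a solution in the convex hull
of the `y i`. Coercivity forces a solution `x₀` of all the inequalities on a large ball to lie in
its interior; testing at points `x₀ + t • (y - x₀)` with small `t > 0` and using monotonicity once
more gives `⟨z - w, x₀ - y⟩ ≤ 0` for every `z ∈ A y`, so that `w ∈ A x₀` by maximality.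
-/

open Topology

namespace Matrix

theorem dotProduct_mulVec_self_nonneg {ι : Type*} [Fintype ι] {a : Matrix ι ι ℝ}
    (ha : ∀ i j, 0 ≤ a i j + a j i) {c : ι → ℝ} (hc : 0 ≤ c) : 0 ≤ c ⬝ᵥ (a *ᵥ c) := by
  have hsym : c ⬝ᵥ (a *ᵥ c) = c ⬝ᵥ (aᵀ *ᵥ c) := by
    rw [mulVec_transpose, dotProduct_mulVec, dotProduct_comm]
  have hsum : 0 ≤ c ⬝ᵥ ((a + aᵀ) *ᵥ c) :=
    Finset.sum_nonneg fun i _ => mul_nonneg (hc i) <|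
      Finset.sum_nonneg fun j _ => mul_nonneg (ha i j) (hc j)
  rw [add_mulVec, dotProduct_add, ← hsym] at hsum
  linarith

theorem exists_mem_stdSimplex_mulVec_nonneg {ι : Type*} [Fintype ι] [Nonempty ι]
    {a : Matrix ι ι ℝ} (ha : ∀ i j, 0 ≤ a i j + a j i) : ∃ l ∈ stdSimplex ℝ ι, 0 ≤ a *ᵥ l := by
  classical
  let B : (ι → ℝ) →ₗ[ℝ] (ι → ℝ) →ₗ[ℝ] ℝ := toLinearMap₂' ℝ a
  have hne : (stdSimplex ℝ ι).Nonempty := ⟨_, single_mem_stdSimplex ℝ (Classical.arbitrary ι)⟩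
  have hcont (f : (ι → ℝ) →ₗ[ℝ] ℝ) : ContinuousOn f (stdSimplex ℝ ι) :=
    (LinearMap.continuous_of_finiteDimensional f).continuousOn
  obtain ⟨m, hm, l, hl, hsaddle⟩ := Sion.exists_isSaddlePointOn (f := fun m l => B m l)
    hne (convex_stdSimplex ℝ ι) (isCompact_stdSimplex ℝ ι)
    (fun l _ => (hcont (B.flip l)).lowerSemicontinuousOn)
    (fun l _ => ((B.flip l).convexOn (convex_stdSimplex ℝ ι)).quasiconvexOn)
    (convex_stdSimplex ℝ ι) hne (isCompact_stdSimplex ℝ ι)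
    (fun m _ => (hcont (B m)).upperSemicontinuousOn)
    (fun m _ => ((B m).concaveOn (convex_stdSimplex ℝ ι)).quasiconcaveOn)
  refine ⟨l, hl, fun i => ?_⟩
  -- the saddle point gives `m ⬝ᵥ a *ᵥ m ≤ eᵢ ⬝ᵥ a *ᵥ l`, and the left side is nonnegative
  have := hsaddle _ (single_mem_stdSimplex ℝ i) m hm
  simp only [B, toLinearMap₂'_apply', single_one_dotProduct] at this
  exact (dotProduct_mulVec_self_nonneg ha hm.1).trans this

end Matrix

open Matrix in
theorem exists_mem_convexHull_forall_apply_le_apply {E ι : Type*} [AddCommGroup E]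
    [Module ℝ E] [Fintype ι] [Nonempty ι] (y : ι → E) (z : ι → Module.Dual ℝ E)
    (hmono : ∀ i j, 0 ≤ (z i - z j) (y i - y j)) :
    ∃ x ∈ convexHull ℝ (Set.range y), ∀ i, z i x ≤ z i (y i) := by
  set a : Matrix ι ι ℝ := of fun i j => z i (y i - y j)
  obtain ⟨l, hl, hal⟩ := exists_mem_stdSimplex_mulVec_nonneg (a := a) fun i j => by
    have := hmono i j
    simp only [a, of_apply, LinearMap.sub_apply, map_sub] at this ⊢
    linarith
  refine ⟨∑ j, l j • y j, (convex_convexHull ℝ _).sum_mem (fun j _ => hl.1 j) hl.2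
    fun j _ => subset_convexHull ℝ _ ⟨j, rfl⟩, fun i => ?_⟩
  have hai : (a *ᵥ l) i = z i (y i) - z i (∑ j, l j • y j) := by
    simp [a, mulVec, dotProduct, map_sum, mul_sub, Finset.sum_sub_distrib, ← Finset.sum_mul, hl.2,
      mul_comm]
  exact sub_nonneg.1 (hai ▸ hal i)

theorem exists_norm_le_forall_apply_le_of_finite {X ι : Type*} [NormedAddCommGroup X]
    [NormedSpace ℝ X] (hrefl : Function.Surjective (NormedSpace.inclusionInDoubleDual ℝ X))
    (f : ι → X →L[ℝ] ℝ) (c : ι → ℝ) (ρ : ℝ)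
    (h : ∀ u : Finset ι, ∃ x : X, ‖x‖ ≤ ρ ∧ ∀ i ∈ u, f i x ≤ c i) :
    ∃ x : X, ‖x‖ ≤ ρ ∧ ∀ i, f i x ≤ c i := by
  let J : X → WeakDual ℝ (X →L[ℝ] ℝ) := fun x =>
    StrongDual.toWeakDual (NormedSpace.inclusionInDoubleDual ℝ X x)
  have hnorm (x : X) : ‖WeakDual.toStrongDual (J x)‖ = ‖x‖ :=
    (NormedSpace.inclusionInDoubleDualLi ℝ).norm_map x
  obtain ⟨Φ, hΦρ, hΦ⟩ := (WeakDual.isCompact_closedBall 0 ρ).inter_iInter_nonempty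
    (fun i => {Φ | Φ (f i) ≤ c i}) (fun i => isClosed_Iic.preimage (WeakDual.eval_continuous _))
    fun u => by
      obtain ⟨x, hxρ, hx⟩ := h u
      exact ⟨J x, by simpa [hnorm] using hxρ, Set.mem_iInter₂.2 hx⟩
  obtain ⟨x, hx⟩ := hrefl (WeakDual.toStrongDual Φ)
  refine ⟨x, ?_, fun i => ?_⟩
  · rw [← (NormedSpace.inclusionInDoubleDualLi ℝ).norm_map x]
    exact hx ▸ mem_closedBall_zero_iff.1 hΦρ
  · exact (congrArg (· (f i)) hx).trans_le (Set.mem_iInter.1 hΦ i)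

def IsMonotoneOperator {X : Type*} [NormedAddCommGroup X] [NormedSpace ℝ X]
    (A : X → Set (X →L[ℝ] ℝ)) : Prop :=
  ∀ x y : X, ∀ xs ∈ A x, ∀ ys ∈ A y, 0 ≤ (xs - ys) (x - y)

section MintyInequality

variable {X : Type*} [NormedAddCommGroup X] [NormedSpace ℝ X] {A : X → Set (X →L[ℝ] ℝ)}

theorem IsMonotoneOperator.exists_minty_point (hA : IsMonotoneOperator A)
    (hrefl : Function.Surjective (NormedSpace.inclusionInDoubleDual ℝ X))
    (w : X →L[ℝ] ℝ) {ρ : ℝ} (hρ : 0 ≤ ρ) :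
    ∃ x₀ : X, ‖x₀‖ ≤ ρ ∧ ∀ y : X, ‖y‖ ≤ ρ → ∀ z ∈ A y, (z - w) x₀ ≤ (z - w) y := by
  let P := {p : X × (X →L[ℝ] ℝ) // p.2 ∈ A p.1 ∧ ‖p.1‖ ≤ ρ}
  obtain ⟨x₀, hx₀ρ, hx₀⟩ := exists_norm_le_forall_apply_le_of_finite hrefl
    (fun p : P => p.1.2 - w) (fun p => (p.1.2 - w) p.1.1) ρ fun u => by
      rcases u.eq_empty_or_nonempty with rfl | ⟨p₀, hp₀⟩
      · exact ⟨0, by simpa using hρ, by simp⟩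
      have : Nonempty u := ⟨⟨p₀, hp₀⟩⟩
      obtain ⟨x, hx, hxle⟩ := exists_mem_convexHull_forall_apply_le_apply
        (fun p : u => p.1.1.1) (fun p => ((p.1.1.2 - w : X →L[ℝ] ℝ) : X →ₗ[ℝ] ℝ))
        fun p q => by simpa using hA _ _ _ p.1.2.1 _ q.1.2.1
      have hball : convexHull ℝ (Set.range fun p : u => p.1.1.1) ⊆ Metric.closedBall 0 ρ :=
        (convex_closedBall 0 ρ).convexHull_subset_iff.2 <| by
          rintro _ ⟨p, rfl⟩
          simpa using p.1.2.2
      exact ⟨x, by simpa using hball hx, fun p hp => hxle ⟨p, hp⟩⟩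
  exact ⟨x₀, hx₀ρ, fun y hy z hz => hx₀ ⟨(y, z), hz, hy⟩⟩

theorem norm_le_of_minty_of_coercive (hne : ∀ x, (A x).Nonempty) (w : X →L[ℝ] ℝ) {R ρ : ℝ}
    (hR0 : 0 ≤ R) (hR : ∀ x : X, R < ‖x‖ → ∀ xs ∈ A x, (‖w‖ + 1) * ‖x‖ ≤ xs x)
    {x₀ : X} (hx₀ρ : ‖x₀‖ ≤ ρ) (hx₀ : ∀ y : X, ‖y‖ ≤ ρ → ∀ z ∈ A y, (z - w) x₀ ≤ (z - w) y) :
    ‖x₀‖ ≤ R := by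
  by_contra! hRx
  have hx₀pos : 0 < ‖x₀‖ := hR0.trans_lt hRx
  obtain ⟨c, hRc, hc1⟩ := exists_between ((div_lt_one hx₀pos).2 hRx)
  have hc0 : 0 < c := (div_nonneg hR0 hx₀pos.le).trans_lt hRc
  have hnorm : ‖c • x₀‖ = c * ‖x₀‖ := by rw [norm_smul, Real.norm_of_nonneg hc0.le]
  obtain ⟨z, hz⟩ := hne (c • x₀)
  have hzw : z x₀ ≤ w x₀ := by
    have := hx₀ (c • x₀) (by rw [hnorm]; nlinarith) z hz
    rw [map_smul, smul_eq_mul, sub_apply] at this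
    nlinarith
  have hcoer : (‖w‖ + 1) * ‖x₀‖ ≤ z x₀ := by
    have := hR (c • x₀) (by rwa [hnorm, ← div_lt_iff₀ hx₀pos]) z hz
    rw [hnorm, map_smul, smul_eq_mul] at this
    nlinarith
  have hw : w x₀ ≤ ‖w‖ * ‖x₀‖ := (le_abs_self _).trans (w.le_opNorm x₀)
  linarith

theorem IsMonotoneOperator.minty_of_minty_on_closedBall (hA : IsMonotoneOperator A)
    (hne : ∀ x, (A x).Nonempty) (w : X →L[ℝ] ℝ) {ρ : ℝ} {x₀ : X} (hx₀ρ : ‖x₀‖ < ρ)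
    (hx₀ : ∀ y : X, ‖y‖ ≤ ρ → ∀ z ∈ A y, (z - w) x₀ ≤ (z - w) y) :
    ∀ y : X, ∀ z ∈ A y, 0 ≤ (w - z) (x₀ - y) := by
  intro y z hz
  obtain ⟨t, ⟨hyt, ht1⟩, ht0 : 0 < t⟩ : ∃ t : ℝ, (‖x₀ + t • (y - x₀)‖ ≤ ρ ∧ t < 1) ∧ 0 < t := by
    have hcont : Continuous fun t : ℝ => ‖x₀ + t • (y - x₀)‖ := by fun_prop
    have hev : ∀ᶠ t in 𝓝[>] (0 : ℝ), ‖x₀ + t • (y - x₀)‖ ≤ ρ ∧ t < 1 := nhdsWithin_le_nhds <|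
      ((hcont.tendsto' 0 _ (by simp)).eventually (ge_mem_nhds hx₀ρ)).and (gt_mem_nhds one_pos)
    exact (hev.and self_mem_nhdsWithin).exists
  obtain ⟨zt, hzt⟩ := hne (x₀ + t • (y - x₀))
  have hminty : 0 ≤ (zt - w) (y - x₀) := by
    have := hx₀ _ hyt zt hzt
    rw [map_add, map_smul, smul_eq_mul] at this
    nlinarith
  have hmono : 0 ≤ (z - zt) (y - x₀) := by
    have := hA _ _ z hz zt hzt
    rw [show y - (x₀ + t • (y - x₀)) = (1 - t) • (y - x₀) by module, map_smul, smul_eq_mul] at this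
    nlinarith
  have hsplit : (w - z) (x₀ - y) = (z - zt) (y - x₀) + (zt - w) (y - x₀) := by
    simp only [sub_apply, map_sub]
    ring
  linarith

end MintyInequality

theorem maximalMonotone_coercive_surjective_general {X : Type*} [NormedAddCommGroup X]
    [NormedSpace ℝ X]
    (hrefl : Function.Surjective (NormedSpace.inclusionInDoubleDual ℝ X))
    (A : X → Set (X →L[ℝ] ℝ)) (hne : ∀ x, (A x).Nonempty)
    (hmono : ∀ x y : X, ∀ xs ∈ A x, ∀ ys ∈ A y, 0 ≤ (xs - ys) (x - y))
    (hmax : ∀ (x : X) (xs : X →L[ℝ] ℝ),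
      (∀ y : X, ∀ ys ∈ A y, 0 ≤ (xs - ys) (x - y)) → xs ∈ A x)
    (hcoer : ∀ M : ℝ, ∃ R : ℝ, ∀ x : X, R < ‖x‖ → ∀ xs ∈ A x, M * ‖x‖ ≤ xs x) :
    (∀ ys : X →L[ℝ] ℝ, ∃ x : X, ys ∈ A x) ∧ ∃ v₀ : X, (0 : X →L[ℝ] ℝ) ∈ A v₀ := by
  have hsurj (w : X →L[ℝ] ℝ) : ∃ x : X, w ∈ A x := by
    obtain ⟨R, hR⟩ := hcoer (‖w‖ + 1)
    obtain ⟨x₀, hx₀ρ, hx₀⟩ :=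
      IsMonotoneOperator.exists_minty_point hmono hrefl w (ρ := max R 0 + 1) (by positivity)
    have hx₀R : ‖x₀‖ ≤ max R 0 := norm_le_of_minty_of_coercive hne w (le_max_right R 0)
      (fun x hx => hR x ((le_max_left R 0).trans_lt hx)) hx₀ρ hx₀
    exact ⟨x₀, hmax x₀ w <|
      IsMonotoneOperator.minty_of_minty_on_closedBall hmono hne w (by linarith) hx₀⟩
  exact ⟨hsurj, hsurj 0⟩

/-- A maximal monotone, coercive (possibly multivalued) operator from a reflexive
Banach space into its dual is surjective; in particular `0` is attained. -/
theorem maximalMonotone_coercive_surjective {X : Type*} [NormedAddCommGroup X]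
    [NormedSpace ℝ X] [CompleteSpace X]
    (hrefl : Function.Surjective (NormedSpace.inclusionInDoubleDual ℝ X))
    (A : X → Set (X →L[ℝ] ℝ)) (hne : ∀ x, (A x).Nonempty)
    (hmono : ∀ x y : X, ∀ xs ∈ A x, ∀ ys ∈ A y, 0 ≤ (xs - ys) (x - y))
    (hmax : ∀ (x : X) (xs : X →L[ℝ] ℝ),
      (∀ y : X, ∀ ys ∈ A y, 0 ≤ (xs - ys) (x - y)) → xs ∈ A x)
    (hcoer : ∀ M : ℝ, ∃ R : ℝ, ∀ x : X, R < ‖x‖ → ∀ xs ∈ A x, M * ‖x‖ ≤ xs x) :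
    (∀ ys : X →L[ℝ] ℝ, ∃ x : X, ys ∈ A x) ∧ ∃ v₀ : X, (0 : X →L[ℝ] ℝ) ∈ A v₀ :=
  maximalMonotone_coercive_surjective_general hrefl A hne hmono hmax hcoer
end

section
/- For the piecewise function j of the previous statement with parameters μ > 0, 0 < ξ₁, ξ₂ < μ: for all ζ₁ ≠ ζ₂ and all v₁ ∈ ∂j(ζ₁), v₂ ∈ ∂j(ζ₂), one has (v₁ − v₂)/(ζ₁ − ζ₂) ≤ μ, i.e. the one-sided Lipschitz (semimonotonicity) condition H(j)(v) holds with l ≡ μ. -/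
open Filter Topology

def clarkeSubdiffR (f : ℝ → ℝ) (x : ℝ) : Set ℝ :=
  {v : ℝ | ∀ h : ℝ, v * h ≤ clarkeDeriv f x h}

/-- The example piecewise potential. -/
noncomputable def jExample (μ ξ₁ ξ₂ : ℝ) (ζ : ℝ) : ℝ :=
  if ζ < -4 then -ξ₁ * ζ - 2 * μ - 4 * ξ₁
  else if ζ < -1 then μ / 2 * ζ ^ 2 + 3 * μ * ζ + 2 * μ
  else if ζ < 1 then -(μ / 2) * ζ ^ 2
  else if ζ < 4 then μ / 2 * ζ ^ 2 - 3 * μ * ζ + 2 * μ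
  else ξ₂ * ζ - 2 * μ - 4 * ξ₂

noncomputable def fEx (μ ξ₁ ξ₂ : ℝ) (ζ : ℝ) : ℝ := μ / 2 * ζ ^ 2 - jExample μ ξ₁ ξ₂ ζ

noncomputable def DEx (μ ξ₁ ξ₂ : ℝ) (ζ : ℝ) : ℝ :=
  if ζ < -4 then μ * ζ + ξ₁
  else if ζ < -1 then -3 * μ
  else if ζ < 1 then 2 * μ * ζ
  else if ζ < 4 then 3 * μ
  else μ * ζ - ξ₂

section pieces
variable {μ ξ₁ ξ₂ : ℝ}

lemma fEx_eq1 {z : ℝ} (hz : z ≤ -4) :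
    fEx μ ξ₁ ξ₂ z = μ / 2 * z ^ 2 + ξ₁ * z + 2 * μ + 4 * ξ₁ := by
  unfold fEx jExample
  rcases hz.lt_or_eq with h | rfl
  · rw [if_pos h]; ring
  · norm_num; ring

lemma fEx_eq2 {z : ℝ} (hz : -4 ≤ z) (hz' : z ≤ -1) :
    fEx μ ξ₁ ξ₂ z = -3 * μ * z - 2 * μ := by
  unfold fEx jExample
  rcases hz'.lt_or_eq with h | rfl
  · rw [if_neg (not_lt.2 hz), if_pos h]; ring
  · norm_num; ring

lemma fEx_eq3 {z : ℝ} (hz : -1 ≤ z) (hz' : z ≤ 1) :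
    fEx μ ξ₁ ξ₂ z = μ * z ^ 2 := by
  unfold fEx jExample
  rcases hz'.lt_or_eq with h | rfl
  · rw [if_neg (not_lt.2 (by linarith : (-4:ℝ) ≤ z)), if_neg (not_lt.2 hz), if_pos h]; ring
  · norm_num; ring

lemma fEx_eq4 {z : ℝ} (hz : 1 ≤ z) (hz' : z ≤ 4) :
    fEx μ ξ₁ ξ₂ z = 3 * μ * z - 2 * μ := by
  unfold fEx jExample
  rcases hz'.lt_or_eq with h | rfl
  · rw [if_neg (not_lt.2 (by linarith : (-4:ℝ) ≤ z)), if_neg (not_lt.2 (by linarith : (-1:ℝ) ≤ z)),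
      if_neg (not_lt.2 hz), if_pos h]
    ring
  · norm_num; ring

lemma fEx_eq5 {z : ℝ} (hz : 4 ≤ z) :
    fEx μ ξ₁ ξ₂ z = μ / 2 * z ^ 2 - ξ₂ * z + 2 * μ + 4 * ξ₂ := by
  unfold fEx jExample
  rw [if_neg (not_lt.2 (by linarith : (-4:ℝ) ≤ z)), if_neg (not_lt.2 (by linarith : (-1:ℝ) ≤ z)),
    if_neg (not_lt.2 (by linarith : (1:ℝ) ≤ z)), if_neg (not_lt.2 hz)]
  ring

lemma DEx_eq1 {z : ℝ} (hz : z < -4) : DEx μ ξ₁ ξ₂ z = μ * z + ξ₁ := by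
  unfold DEx; rw [if_pos hz]

lemma DEx_eq2 {z : ℝ} (hz : -4 ≤ z) (hz' : z < -1) : DEx μ ξ₁ ξ₂ z = -3 * μ := by
  unfold DEx; rw [if_neg (not_lt.2 hz), if_pos hz']

lemma DEx_eq3 {z : ℝ} (hz : -1 ≤ z) (hz' : z < 1) : DEx μ ξ₁ ξ₂ z = 2 * μ * z := by
  unfold DEx
  rw [if_neg (not_lt.2 (by linarith : (-4:ℝ) ≤ z)), if_neg (not_lt.2 hz), if_pos hz']

lemma DEx_eq4 {z : ℝ} (hz : 1 ≤ z) (hz' : z < 4) : DEx μ ξ₁ ξ₂ z = 3 * μ := by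
  unfold DEx
  rw [if_neg (not_lt.2 (by linarith : (-4:ℝ) ≤ z)), if_neg (not_lt.2 (by linarith : (-1:ℝ) ≤ z)),
    if_neg (not_lt.2 hz), if_pos hz']

lemma DEx_eq5 {z : ℝ} (hz : 4 ≤ z) : DEx μ ξ₁ ξ₂ z = μ * z - ξ₂ := by
  unfold DEx
  rw [if_neg (not_lt.2 (by linarith : (-4:ℝ) ≤ z)), if_neg (not_lt.2 (by linarith : (-1:ℝ) ≤ z)),
    if_neg (not_lt.2 (by linarith : (1:ℝ) ≤ z)), if_neg (not_lt.2 hz)]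

lemma DEx_mono (hμ : 0 < μ) (hξ₁' : ξ₁ < μ) (hξ₂' : ξ₂ < μ) {a b : ℝ} (hab : a ≤ b) :
    DEx μ ξ₁ ξ₂ a ≤ DEx μ ξ₁ ξ₂ b := by
  unfold DEx; split_ifs <;> nlinarith

lemma piece1 (hμ : 0 < μ) (hξ₁' : ξ₁ < μ) (hξ₂' : ξ₂ < μ) {a b : ℝ} (hab : a ≤ b) (hb : b ≤ -4) :
    DEx μ ξ₁ ξ₂ a * (b - a) ≤ fEx μ ξ₁ ξ₂ b - fEx μ ξ₁ ξ₂ a ∧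
      fEx μ ξ₁ ξ₂ b - fEx μ ξ₁ ξ₂ a ≤ DEx μ ξ₁ ξ₂ b * (b - a) := by
  rcases hab.lt_or_eq with h | rfl
  swap
  · constructor <;> simp
  have ha : a < -4 := lt_of_lt_of_le h hb
  rw [fEx_eq1 hb, fEx_eq1 (le_of_lt ha), DEx_eq1 ha]
  rcases hb.lt_or_eq with hb' | rfl
  · rw [DEx_eq1 hb']
    constructor <;> nlinarith [sq_nonneg (b - a)]
  · rw [DEx_eq2 le_rfl (by norm_num)]
    constructor <;> nlinarith [sq_nonneg (a + 4)]

lemma piece2 (hμ : 0 < μ) (hξ₁' : ξ₁ < μ) (hξ₂' : ξ₂ < μ) {a b : ℝ} (ha : -4 ≤ a) (hab : a ≤ b)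
    (hb : b ≤ -1) :
    DEx μ ξ₁ ξ₂ a * (b - a) ≤ fEx μ ξ₁ ξ₂ b - fEx μ ξ₁ ξ₂ a ∧
      fEx μ ξ₁ ξ₂ b - fEx μ ξ₁ ξ₂ a ≤ DEx μ ξ₁ ξ₂ b * (b - a) := by
  rcases hab.lt_or_eq with h | rfl
  swap
  · constructor <;> simp
  have ha' : a < -1 := lt_of_lt_of_le h hb
  rw [fEx_eq2 (by linarith) hb, fEx_eq2 ha (le_of_lt ha'), DEx_eq2 ha ha']
  rcases hb.lt_or_eq with hb' | rfl
  · rw [DEx_eq2 (by linarith) hb']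
    constructor <;> nlinarith
  · rw [DEx_eq3 le_rfl (by norm_num)]
    constructor <;> nlinarith

lemma piece3 (hμ : 0 < μ) (hξ₁' : ξ₁ < μ) (hξ₂' : ξ₂ < μ) {a b : ℝ} (ha : -1 ≤ a) (hab : a ≤ b)
    (hb : b ≤ 1) :
    DEx μ ξ₁ ξ₂ a * (b - a) ≤ fEx μ ξ₁ ξ₂ b - fEx μ ξ₁ ξ₂ a ∧
      fEx μ ξ₁ ξ₂ b - fEx μ ξ₁ ξ₂ a ≤ DEx μ ξ₁ ξ₂ b * (b - a) := by
  rcases hab.lt_or_eq with h | rfl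
  swap
  · constructor <;> simp
  have ha' : a < 1 := lt_of_lt_of_le h hb
  rw [fEx_eq3 (by linarith) hb, fEx_eq3 ha (le_of_lt ha'), DEx_eq3 ha ha']
  rcases hb.lt_or_eq with hb' | rfl
  · rw [DEx_eq3 (by linarith) hb']
    constructor <;> nlinarith [sq_nonneg (b - a)]
  · rw [DEx_eq4 le_rfl (by norm_num)]
    constructor <;> nlinarith [sq_nonneg (a - 1), sq_nonneg (a + 1)]

lemma piece4 (hμ : 0 < μ) (hξ₁' : ξ₁ < μ) (hξ₂' : ξ₂ < μ) {a b : ℝ} (ha : 1 ≤ a) (hab : a ≤ b)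
    (hb : b ≤ 4) :
    DEx μ ξ₁ ξ₂ a * (b - a) ≤ fEx μ ξ₁ ξ₂ b - fEx μ ξ₁ ξ₂ a ∧
      fEx μ ξ₁ ξ₂ b - fEx μ ξ₁ ξ₂ a ≤ DEx μ ξ₁ ξ₂ b * (b - a) := by
  rcases hab.lt_or_eq with h | rfl
  swap
  · constructor <;> simp
  have ha' : a < 4 := lt_of_lt_of_le h hb
  rw [fEx_eq4 (by linarith) hb, fEx_eq4 ha (le_of_lt ha'), DEx_eq4 ha ha']
  rcases hb.lt_or_eq with hb' | rfl
  · rw [DEx_eq4 (by linarith) hb']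
    constructor <;> nlinarith
  · rw [DEx_eq5 le_rfl]
    constructor <;> nlinarith

lemma piece5 (hμ : 0 < μ) (hξ₁' : ξ₁ < μ) (hξ₂' : ξ₂ < μ) {a b : ℝ} (ha : 4 ≤ a) (hab : a ≤ b) :
    DEx μ ξ₁ ξ₂ a * (b - a) ≤ fEx μ ξ₁ ξ₂ b - fEx μ ξ₁ ξ₂ a ∧
      fEx μ ξ₁ ξ₂ b - fEx μ ξ₁ ξ₂ a ≤ DEx μ ξ₁ ξ₂ b * (b - a) := by
  rw [fEx_eq5 ha, fEx_eq5 (le_trans ha hab), DEx_eq5 ha, DEx_eq5 (le_trans ha hab)]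
  constructor <;> nlinarith [sq_nonneg (b - a)]

/-- glue step: combine bounds on [a,c] and [c,b] into bounds on [a,b] -/
lemma glue (hμ : 0 < μ) (hξ₁' : ξ₁ < μ) (hξ₂' : ξ₂ < μ) {a b c : ℝ} (hac : a ≤ c) (hcb : c ≤ b)
    (h1 : DEx μ ξ₁ ξ₂ a * (c - a) ≤ fEx μ ξ₁ ξ₂ c - fEx μ ξ₁ ξ₂ a ∧
      fEx μ ξ₁ ξ₂ c - fEx μ ξ₁ ξ₂ a ≤ DEx μ ξ₁ ξ₂ c * (c - a))
    (h2 : DEx μ ξ₁ ξ₂ c * (b - c) ≤ fEx μ ξ₁ ξ₂ b - fEx μ ξ₁ ξ₂ c ∧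
      fEx μ ξ₁ ξ₂ b - fEx μ ξ₁ ξ₂ c ≤ DEx μ ξ₁ ξ₂ b * (b - c)) :
    DEx μ ξ₁ ξ₂ a * (b - a) ≤ fEx μ ξ₁ ξ₂ b - fEx μ ξ₁ ξ₂ a ∧
      fEx μ ξ₁ ξ₂ b - fEx μ ξ₁ ξ₂ a ≤ DEx μ ξ₁ ξ₂ b * (b - a) := by
  have hDac : DEx μ ξ₁ ξ₂ a ≤ DEx μ ξ₁ ξ₂ c := DEx_mono hμ hξ₁' hξ₂' hac
  have hDcb : DEx μ ξ₁ ξ₂ c ≤ DEx μ ξ₁ ξ₂ b := DEx_mono hμ hξ₁' hξ₂' hcb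
  constructor
  · nlinarith [mul_le_mul_of_nonneg_right hDac (by linarith : (0:ℝ) ≤ b - c)]
  · nlinarith [mul_le_mul_of_nonneg_right hDcb (by linarith : (0:ℝ) ≤ c - a)]

/-- the key two-sided slope estimate for fEx -/
lemma fEx_slopes (hμ : 0 < μ) (hξ₁' : ξ₁ < μ) (hξ₂' : ξ₂ < μ) {a b : ℝ} (hab : a ≤ b) :
    DEx μ ξ₁ ξ₂ a * (b - a) ≤ fEx μ ξ₁ ξ₂ b - fEx μ ξ₁ ξ₂ a ∧
      fEx μ ξ₁ ξ₂ b - fEx μ ξ₁ ξ₂ a ≤ DEx μ ξ₁ ξ₂ b * (b - a) := by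
  rcases le_or_gt b (-4) with h4 | h4
  · exact piece1 hμ hξ₁' hξ₂' hab h4
  rcases le_or_gt a (-4) with g4 | g4
  swap
  · -- -4 < a
    rcases le_or_gt b (-1) with h1 | h1
    · exact piece2 hμ hξ₁' hξ₂' g4.le hab h1
    rcases le_or_gt a (-1) with g1 | g1
    swap
    · rcases le_or_gt b 1 with h2 | h2
      · exact piece3 hμ hξ₁' hξ₂' g1.le hab h2
      rcases le_or_gt a 1 with g2 | g2
      swap
      · rcases le_or_gt b 4 with h3 | h3
        · exact piece4 hμ hξ₁' hξ₂' g2.le hab h3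
        rcases le_or_gt a 4 with g3 | g3
        swap
        · exact piece5 hμ hξ₁' hξ₂' g3.le hab
        · exact glue hμ hξ₁' hξ₂' g3 h3.le
            (piece4 hμ hξ₁' hξ₂' g2.le g3 le_rfl)
            (piece5 hμ hξ₁' hξ₂' le_rfl h3.le)
      · -- a ≤ 1 < b, -1 < a
        rcases le_or_gt b 4 with h3 | h3
        · exact glue hμ hξ₁' hξ₂' g2 h2.le
            (piece3 hμ hξ₁' hξ₂' g1.le g2 le_rfl)
            (piece4 hμ hξ₁' hξ₂' le_rfl h2.le h3)
        · exact glue hμ hξ₁' hξ₂' g2 (by linarith)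
            (piece3 hμ hξ₁' hξ₂' g1.le g2 le_rfl)
            (glue hμ hξ₁' hξ₂' (by norm_num) h3.le
              (piece4 hμ hξ₁' hξ₂' le_rfl (by norm_num) le_rfl)
              (piece5 hμ hξ₁' hξ₂' le_rfl h3.le))
    · -- a ≤ -1 < b , -4 < a
      have base : DEx μ ξ₁ ξ₂ a * ((-1) - a) ≤ fEx μ ξ₁ ξ₂ (-1) - fEx μ ξ₁ ξ₂ a ∧
          fEx μ ξ₁ ξ₂ (-1) - fEx μ ξ₁ ξ₂ a ≤ DEx μ ξ₁ ξ₂ (-1) * ((-1) - a) :=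
        piece2 hμ hξ₁' hξ₂' g4.le g1 le_rfl
      rcases le_or_gt b 1 with h2 | h2
      · exact glue hμ hξ₁' hξ₂' g1 h1.le base (piece3 hμ hξ₁' hξ₂' le_rfl h1.le h2)
      rcases le_or_gt b 4 with h3 | h3
      · exact glue hμ hξ₁' hξ₂' g1 (by linarith) base
          (glue hμ hξ₁' hξ₂' (by norm_num) h2.le
            (piece3 hμ hξ₁' hξ₂' le_rfl (by norm_num) le_rfl)
            (piece4 hμ hξ₁' hξ₂' le_rfl h2.le h3))
      · exact glue hμ hξ₁' hξ₂' g1 (by linarith) base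
          (glue hμ hξ₁' hξ₂' (by norm_num) (by linarith)
            (piece3 hμ hξ₁' hξ₂' le_rfl (by norm_num) le_rfl)
            (glue hμ hξ₁' hξ₂' (by norm_num) h3.le
              (piece4 hμ hξ₁' hξ₂' le_rfl (by norm_num) le_rfl)
              (piece5 hμ hξ₁' hξ₂' le_rfl h3.le)))
  · -- a ≤ -4 < b : glue at -4 with the rest handled recursively
    have base : DEx μ ξ₁ ξ₂ a * ((-4) - a) ≤ fEx μ ξ₁ ξ₂ (-4) - fEx μ ξ₁ ξ₂ a ∧
        fEx μ ξ₁ ξ₂ (-4) - fEx μ ξ₁ ξ₂ a ≤ DEx μ ξ₁ ξ₂ (-4) * ((-4) - a) :=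
      piece1 hμ hξ₁' hξ₂' g4 le_rfl
    have rest : DEx μ ξ₁ ξ₂ (-4) * (b - (-4)) ≤ fEx μ ξ₁ ξ₂ b - fEx μ ξ₁ ξ₂ (-4) ∧
        fEx μ ξ₁ ξ₂ b - fEx μ ξ₁ ξ₂ (-4) ≤ DEx μ ξ₁ ξ₂ b * (b - (-4)) := by
      rcases le_or_gt b (-1) with h1 | h1
      · exact piece2 hμ hξ₁' hξ₂' le_rfl (by linarith) h1
      have base2 : DEx μ ξ₁ ξ₂ (-4) * ((-1) - (-4)) ≤ fEx μ ξ₁ ξ₂ (-1) - fEx μ ξ₁ ξ₂ (-4) ∧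
          fEx μ ξ₁ ξ₂ (-1) - fEx μ ξ₁ ξ₂ (-4) ≤ DEx μ ξ₁ ξ₂ (-1) * ((-1) - (-4)) :=
        piece2 hμ hξ₁' hξ₂' le_rfl (by norm_num) le_rfl
      rcases le_or_gt b 1 with h2 | h2
      · exact glue hμ hξ₁' hξ₂' (by norm_num) h1.le base2
          (piece3 hμ hξ₁' hξ₂' le_rfl h1.le h2)
      rcases le_or_gt b 4 with h3 | h3
      · exact glue hμ hξ₁' hξ₂' (by norm_num) (by linarith) base2
          (glue hμ hξ₁' hξ₂' (by norm_num) h2.le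
            (piece3 hμ hξ₁' hξ₂' le_rfl (by norm_num) le_rfl)
            (piece4 hμ hξ₁' hξ₂' le_rfl h2.le h3))
      · exact glue hμ hξ₁' hξ₂' (by norm_num) (by linarith) base2
          (glue hμ hξ₁' hξ₂' (by norm_num) (by linarith)
            (piece3 hμ hξ₁' hξ₂' le_rfl (by norm_num) le_rfl)
            (glue hμ hξ₁' hξ₂' (by norm_num) h3.le
              (piece4 hμ hξ₁' hξ₂' le_rfl (by norm_num) le_rfl)
              (piece5 hμ hξ₁' hξ₂' le_rfl h3.le)))
    exact glue hμ hξ₁' hξ₂' g4 (by linarith) base rest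


end pieces

lemma clarkeDeriv_le_of_bounds (f : ℝ → ℝ) (x h M C ε : ℝ) (hε : 0 < ε)
    (hub : ∀ y t : ℝ, |y - x| < ε → 0 < t → t < ε → (f (y + t * h) - f y) / t ≤ M)
    (hlb : ∀ y t : ℝ, |y - x| < ε → 0 < t → t < ε → C ≤ (f (y + t * h) - f y) / t) :
    clarkeDeriv f x h ≤ M := by
  have hev : ∀ᶠ p : ℝ × ℝ in (nhds x ×ˢ nhdsWithin 0 (Set.Ioi (0 : ℝ))),
      |p.1 - x| < ε ∧ p.2 ∈ Set.Ioo (0 : ℝ) ε := by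
    have h1 : ∀ᶠ y in nhds x, |y - x| < ε := by
      filter_upwards [Metric.ball_mem_nhds x hε] with y hy
      simpa [Real.dist_eq] using hy
    have h2 : ∀ᶠ t in nhdsWithin 0 (Set.Ioi (0 : ℝ)), t ∈ Set.Ioo (0 : ℝ) ε :=
      Filter.eventually_of_mem (Ioo_mem_nhdsGT_of_mem ⟨le_rfl, hε⟩) fun t ht => ht
    exact h1.prod_mk h2
  unfold clarkeDeriv
  apply Filter.limsup_le_of_le
  · exact Filter.isCoboundedUnder_le_of_eventually_le _ (x := C)
      (hev.mono fun p hp => by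
        simpa [smul_eq_mul] using hlb p.1 p.2 hp.1 hp.2.1 hp.2.2)
  · exact hev.mono fun p hp => by
      simpa [smul_eq_mul] using hub p.1 p.2 hp.1 hp.2.1 hp.2.2

lemma jdiff (μ ξ₁ ξ₂ a b : ℝ) :
    jExample μ ξ₁ ξ₂ b - jExample μ ξ₁ ξ₂ a
      = μ / 2 * b ^ 2 - μ / 2 * a ^ 2 - (fEx μ ξ₁ ξ₂ b - fEx μ ξ₁ ξ₂ a) := by
  unfold fEx; ring

lemma subdiff_bounds {μ ξ₁ ξ₂ : ℝ} (hμ : 0 < μ) (hξ₁' : ξ₁ < μ) (hξ₂' : ξ₂ < μ)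
    {x v ε : ℝ} (hε : 0 < ε) (hv : v ∈ clarkeSubdiffR (jExample μ ξ₁ ξ₂) x) :
    v ≤ μ * x + 3 / 2 * (μ * ε) - DEx μ ξ₁ ξ₂ (x - ε) ∧
      -v ≤ -(μ * x) + 3 / 2 * (μ * ε) + DEx μ ξ₁ ξ₂ (x + ε) := by
  constructor
  · have h1 := hv 1
    rw [mul_one] at h1
    refine h1.trans (clarkeDeriv_le_of_bounds _ x 1 _ (μ * (x - ε) - DEx μ ξ₁ ξ₂ (x + 2 * ε)) ε hε
      ?_ ?_)
    · intro y t hy ht ht'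
      have habs := abs_lt.1 hy
      have hsl := (fEx_slopes hμ hξ₁' hξ₂' (a := y) (b := y + t * 1) (by linarith)).1
      have hD := DEx_mono hμ hξ₁' hξ₂' (show x - ε ≤ y by linarith)
      rw [div_le_iff₀ ht]
      have hmul1 : μ * (y - x) ≤ μ * ε := mul_le_mul_of_nonneg_left habs.2.le hμ.le
      have hmul2 : μ * t ≤ μ * ε := mul_le_mul_of_nonneg_left ht'.le hμ.le
      have key : μ * y + μ / 2 * t - DEx μ ξ₁ ξ₂ y
          ≤ μ * x + 3 / 2 * (μ * ε) - DEx μ ξ₁ ξ₂ (x - ε) := by nlinarith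
      have := mul_le_mul_of_nonneg_right key ht.le
      rw [jdiff]
      nlinarith [hsl]
    · intro y t hy ht ht'
      have habs := abs_lt.1 hy
      have hsl := (fEx_slopes hμ hξ₁' hξ₂' (a := y) (b := y + t * 1) (by linarith)).2
      have hD := DEx_mono hμ hξ₁' hξ₂' (show y + t * 1 ≤ x + 2 * ε by linarith)
      rw [le_div_iff₀ ht]
      have hmul1 : μ * (x - y) ≤ μ * ε := mul_le_mul_of_nonneg_left (by linarith) hμ.le
      have key : μ * (x - ε) - DEx μ ξ₁ ξ₂ (x + 2 * ε)
          ≤ μ * y + μ / 2 * t - DEx μ ξ₁ ξ₂ (y + t * 1) := by nlinarith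
      have := mul_le_mul_of_nonneg_right key ht.le
      rw [jdiff]
      nlinarith [hsl]
  · have h1 := hv (-1)
    rw [mul_neg_one] at h1
    refine h1.trans (clarkeDeriv_le_of_bounds _ x (-1) _
      (-(μ * (x + ε)) + DEx μ ξ₁ ξ₂ (x - 2 * ε)) ε hε ?_ ?_)
    · intro y t hy ht ht'
      have habs := abs_lt.1 hy
      have hsl := (fEx_slopes hμ hξ₁' hξ₂' (a := y + t * (-1)) (b := y) (by linarith)).2
      have hD := DEx_mono hμ hξ₁' hξ₂' (show y ≤ x + ε by linarith)
      rw [div_le_iff₀ ht]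
      have hmul1 : μ * (x - y) ≤ μ * ε := mul_le_mul_of_nonneg_left (by linarith) hμ.le
      have hmul2 : μ * t ≤ μ * ε := mul_le_mul_of_nonneg_left ht'.le hμ.le
      have key : -(μ * y) + μ / 2 * t + DEx μ ξ₁ ξ₂ y
          ≤ -(μ * x) + 3 / 2 * (μ * ε) + DEx μ ξ₁ ξ₂ (x + ε) := by nlinarith
      have := mul_le_mul_of_nonneg_right key ht.le
      rw [jdiff]
      nlinarith [hsl]
    · intro y t hy ht ht'
      have habs := abs_lt.1 hy
      have hsl := (fEx_slopes hμ hξ₁' hξ₂' (a := y + t * (-1)) (b := y) (by linarith)).1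
      have hD := DEx_mono hμ hξ₁' hξ₂' (show x - 2 * ε ≤ y + t * (-1) by linarith)
      rw [le_div_iff₀ ht]
      have hmul1 : μ * (y - x) ≤ μ * ε := mul_le_mul_of_nonneg_left habs.2.le hμ.le
      have key : -(μ * (x + ε)) + DEx μ ξ₁ ξ₂ (x - 2 * ε)
          ≤ -(μ * y) + μ / 2 * t + DEx μ ξ₁ ξ₂ (y + t * (-1)) := by nlinarith
      have := mul_le_mul_of_nonneg_right key ht.le
      rw [jdiff]
      nlinarith [hsl]

lemma main_aux {μ ξ₁ ξ₂ : ℝ} (hμ : 0 < μ) (hξ₁' : ξ₁ < μ) (hξ₂' : ξ₂ < μ)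
    {ζ₁ ζ₂ v₁ v₂ : ℝ} (hlt : ζ₂ < ζ₁)
    (hv₁ : v₁ ∈ clarkeSubdiffR (jExample μ ξ₁ ξ₂) ζ₁)
    (hv₂ : v₂ ∈ clarkeSubdiffR (jExample μ ξ₁ ξ₂) ζ₂) :
    v₁ - v₂ ≤ μ * (ζ₁ - ζ₂) := by
  by_contra hcon
  push_neg at hcon
  set g := v₁ - v₂ - μ * (ζ₁ - ζ₂) with hg
  have hgpos : 0 < g := by simp [hg]; linarith
  set ε := min ((ζ₁ - ζ₂) / 2) (g / (3 * μ + 1)) with hεdef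
  have hεpos : 0 < ε := lt_min (by linarith) (div_pos hgpos (by linarith))
  have hε1 : ε ≤ (ζ₁ - ζ₂) / 2 := min_le_left _ _
  have hb₁ := (subdiff_bounds hμ hξ₁' hξ₂' hεpos hv₁).1
  have hb₂ := (subdiff_bounds hμ hξ₁' hξ₂' hεpos hv₂).2
  have hD := DEx_mono hμ hξ₁' hξ₂' (show ζ₂ + ε ≤ ζ₁ - ε by linarith)
  have h3 : 3 * μ * ε < g := by
    have h4 : ε ≤ g / (3 * μ + 1) := min_le_right _ _
    rw [le_div_iff₀ (by linarith)] at h4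
    nlinarith
  linarith

/-- The example potential satisfies the one-sided Lipschitz condition H(j)(v)
with `l ≡ μ`: `(v₁ − v₂)/(ζ₁ − ζ₂) ≤ μ` for all `ζ₁ ≠ ζ₂` and all
`vᵢ ∈ ∂j(ζᵢ)`. -/
theorem jExample_semimonotone (μ ξ₁ ξ₂ : ℝ) (hμ : 0 < μ)
    (hξ₁ : 0 < ξ₁) (hξ₁' : ξ₁ < μ) (hξ₂ : 0 < ξ₂) (hξ₂' : ξ₂ < μ) :
    ∀ ζ₁ ζ₂ : ℝ, ζ₁ ≠ ζ₂ →
      ∀ v₁ ∈ clarkeSubdiffR (jExample μ ξ₁ ξ₂) ζ₁,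
      ∀ v₂ ∈ clarkeSubdiffR (jExample μ ξ₁ ξ₂) ζ₂,
        (v₁ - v₂) / (ζ₁ - ζ₂) ≤ μ := by
  intro ζ₁ ζ₂ hne v₁ hv₁ v₂ hv₂
  rcases hne.lt_or_gt with hlt | hlt
  · rw [div_le_iff_of_neg (by linarith)]
    have := main_aux hμ hξ₁' hξ₂' hlt hv₂ hv₁
    linarith
  · rw [div_le_iff₀ (by linarith)]
    have := main_aux hμ hξ₁' hξ₂' hlt hv₁ hv₂
    linarith
end
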